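/- Let V be a real orthogonal n×n matrix whose first column is the vector (1/√n)(1,1,...,1)^T. Then: (i) for every real (n−1)×(n−1) matrix X, the matrix V · (1 ⊕ X) · V^T has all row sums and all column sums equal to 1, where 1 ⊕ X is the block-diagonal matrix with (1,1) entry 1 and lower-right block X; and (ii) conversely, for every real n×n matrix A all of whose row sums and column sums equal 1, there exists a real (n−1)×(n−1) matrix X with A = V · (1 ⊕ X) · V^T. -/
import Mathlib


open Matrix
/-- The block-diagonal matrix `1 ⊕ X`. -/
def oneOplus {m : ℕ} (X : Matrix (Fin m) (Fin m) ℝ) : Matrix (Fin (m + 1)) (Fin (m + 1)) ℝ :=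
  Matrix.of fun i j =>
    if hi : i = 0 then (if j = 0 then 1 else 0)
    else if hj : j = 0 then 0 else X (i.pred hi) (j.pred hj)

lemma oneOplus_col0 {m : ℕ} (X : Matrix (Fin m) (Fin m) ℝ) (k : Fin (m+1)) :
    oneOplus X k 0 = if k = 0 then 1 else 0 := by
  unfold oneOplus
  by_cases h : k = 0 <;> simp [h]

lemma oneOplus_row0 {m : ℕ} (X : Matrix (Fin m) (Fin m) ℝ) (k : Fin (m+1)) :
    oneOplus X 0 k = if k = 0 then 1 else 0 := by
  unfold oneOplus
  simp

/-- Let `V` be a real orthogonal `n × n` matrix (`n = m+1 ≥ 1`) whose first column is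
`(1/√n)(1,…,1)ᵀ`. Then (i) for every real `(n-1) × (n-1)` matrix `X`, the matrix
`V * (1 ⊕ X) * Vᵀ` has all row and column sums equal to `1`; and (ii) every real
`n × n` matrix `A` with all row and column sums equal to `1` can be written as
`A = V * (1 ⊕ X) * Vᵀ` for some real `(n-1) × (n-1)` matrix `X`. -/
theorem stmt2 (m : ℕ) (V : Matrix (Fin (m + 1)) (Fin (m + 1)) ℝ)
    (hV : Vᵀ * V = 1) (hcol : ∀ i, V i 0 = 1 / Real.sqrt (m + 1)) :
    (∀ X : Matrix (Fin m) (Fin m) ℝ,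
      (∀ i, ∑ j, (V * oneOplus X * Vᵀ) i j = 1) ∧
      (∀ j, ∑ i, (V * oneOplus X * Vᵀ) i j = 1)) ∧
    (∀ A : Matrix (Fin (m + 1)) (Fin (m + 1)) ℝ,
      (∀ i, ∑ j, A i j = 1) → (∀ j, ∑ i, A i j = 1) →
      ∃ X : Matrix (Fin m) (Fin m) ℝ, A = V * oneOplus X * Vᵀ) := by
  have hn : (0:ℝ) < (m:ℝ) + 1 := by positivity
  set s := Real.sqrt ((m:ℝ) + 1) with hsdef
  have hs : s ≠ 0 := ne_of_gt (Real.sqrt_pos.mpr hn)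
  have hVVt : V * Vᵀ = 1 := mul_eq_one_comm.mp hV
  have colsum : ∀ j, ∑ i, V i j = if j = 0 then s else 0 := by
    intro j
    have h1 : ∑ i, V i 0 * V i j = (Vᵀ * V) 0 j := by
      simp [Matrix.mul_apply, Matrix.transpose_apply]
    calc ∑ i, V i j = s * ∑ i, V i 0 * V i j := by
          rw [Finset.mul_sum]
          refine Finset.sum_congr rfl fun i _ => ?_
          rw [hcol i]; field_simp
      _ = s * (1 : Matrix (Fin (m+1)) (Fin (m+1)) ℝ) 0 j := by rw [h1, hV]
      _ = if j = 0 then s else 0 := by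
          rcases eq_or_ne j 0 with h | h
          · simp [h, Matrix.one_apply]
          · simp [Matrix.one_apply, Ne.symm h, h]
  constructor
  · intro X
    constructor
    · intro i
      calc ∑ j, (V * oneOplus X * Vᵀ) i j
          = ∑ j, ∑ k, (V * oneOplus X) i k * V j k := by
            simp [Matrix.mul_apply, Matrix.transpose_apply]
        _ = ∑ k, ∑ j, (V * oneOplus X) i k * V j k := Finset.sum_comm
        _ = ∑ k, (V * oneOplus X) i k * ∑ j, V j k := by
            simp [Finset.mul_sum]
        _ = (V * oneOplus X) i 0 * s := by
            simp [colsum, mul_ite, mul_zero]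
        _ = V i 0 * s := by
            congr 1
            simp [Matrix.mul_apply, oneOplus_col0, mul_ite, mul_zero]
        _ = 1 := by rw [hcol i]; field_simp
    · intro j
      calc ∑ i, (V * oneOplus X * Vᵀ) i j
          = ∑ i, ∑ k, V i k * (oneOplus X * Vᵀ) k j := by
            refine Finset.sum_congr rfl fun i _ => ?_
            rw [Matrix.mul_assoc, Matrix.mul_apply]
        _ = ∑ k, ∑ i, V i k * (oneOplus X * Vᵀ) k j := Finset.sum_comm
        _ = ∑ k, (∑ i, V i k) * (oneOplus X * Vᵀ) k j := by
            simp [Finset.sum_mul]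
        _ = s * (oneOplus X * Vᵀ) 0 j := by
            simp [colsum, ite_mul, zero_mul]
        _ = s * V j 0 := by
            congr 1
            simp [Matrix.mul_apply, oneOplus_row0, ite_mul, zero_mul, Matrix.transpose_apply]
        _ = 1 := by rw [hcol j]; field_simp
  · intro A hrow hcolA
    set B := Vᵀ * A * V with hBdef
    have hBcol : ∀ k, B k 0 = if k = 0 then 1 else 0 := by
      intro k
      calc B k 0 = ∑ j, (Vᵀ * A) k j * V j 0 := by simp [hBdef, Matrix.mul_apply]
        _ = (1/s) * ∑ j, ∑ i, V i k * A i j := by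
            rw [Finset.mul_sum]
            refine Finset.sum_congr rfl fun j _ => ?_
            rw [hcol j]
            simp [Matrix.mul_apply, Matrix.transpose_apply, Finset.sum_mul, mul_comm]
        _ = (1/s) * ∑ i, V i k * ∑ j, A i j := by
            rw [Finset.sum_comm]
            simp [Finset.mul_sum]
        _ = (1/s) * ∑ i, V i k := by
            congr 1
            refine Finset.sum_congr rfl fun i _ => ?_
            rw [hrow i, mul_one]
        _ = if k = 0 then 1 else 0 := by
            rw [colsum k]
            rcases eq_or_ne k 0 with h | h <;> simp [h] <;> field_simp
    have hBrow : ∀ k, B 0 k = if k = 0 then 1 else 0 := by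
      intro k
      calc B 0 k = ∑ i, V i 0 * (A * V) i k := by
            simp [hBdef, Matrix.mul_assoc, Matrix.mul_apply, Matrix.transpose_apply]
        _ = (1/s) * ∑ i, ∑ j, A i j * V j k := by
            rw [Finset.mul_sum]
            refine Finset.sum_congr rfl fun i _ => ?_
            rw [hcol i]
            simp [Matrix.mul_apply, Finset.mul_sum]
        _ = (1/s) * ∑ j, (∑ i, A i j) * V j k := by
            rw [Finset.sum_comm]
            simp [Finset.sum_mul]
        _ = (1/s) * ∑ j, V j k := by
            congr 1
            refine Finset.sum_congr rfl fun j _ => ?_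
            rw [hcolA j, one_mul]
        _ = if k = 0 then 1 else 0 := by
            rw [colsum k]
            rcases eq_or_ne k 0 with h | h <;> simp [h] <;> field_simp
    refine ⟨fun i j => B i.succ j.succ, ?_⟩
    have hB : oneOplus (fun i j => B i.succ j.succ) = B := by
      ext i j
      unfold oneOplus
      rcases eq_or_ne i 0 with hi | hi
      · simp only [Matrix.of_apply, hi, dif_pos]
        rw [hBrow j]
      · rcases eq_or_ne j 0 with hj | hj
        · subst hj
          simp only [Matrix.of_apply, dif_neg hi]
          simp only [dite_true]
          rw [hBcol i, if_neg hi]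
        · simp only [Matrix.of_apply, dif_neg hi, dif_neg hj]
          rw [Fin.succ_pred, Fin.succ_pred]
    rw [hB, hBdef, ← Matrix.mul_assoc, ← Matrix.mul_assoc, hVVt, one_mul,
      Matrix.mul_assoc, hVVt, Matrix.mul_one]
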